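/- arXiv:2605.05370 — 2 statements merged into one kernel-verified Lean document; each statement's English description precedes it below -/
import Mathlib

section
/- Let V be a real-valued random variable distributed as a Gaussian N(μ, τ²) with τ > 0. Then the expectation of max(0, V) equals μ·Φ(μ/τ) + τ·φ(μ/τ), where Φ and φ denote the cumulative distribution function and probability density function of the standard Gaussian N(0,1), respectively. Equivalently, ∫ max(0, v) d(gaussianReal μ τ²)(v) = μ·Φ(μ/τ) + τ·φ(μ/τ). -/
/-!
Write `V = τ Z + μ` with `Z ~ N(0,1)`. Then `max 0 V` vanishes for `Z ≤ z₀ := -μ/τ` and equals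
`τ Z + μ` above `z₀`. Since `-φ` is an antiderivative of `z φ(z)`, the first term contributes
`τ φ(z₀)`, and by the symmetry of `N(0,1)` the second contributes `μ P(Z > z₀) = μ Φ(μ/τ)`.
-/

open MeasureTheory ProbabilityTheory Real

/-- The cdf `Φ` of the standard Gaussian `N(0,1)`. -/
noncomputable def stdGaussianCDF (t : ℝ) : ℝ :=
  ((gaussianReal 0 1) (Set.Iic t)).toReal

/-- The pdf `φ` of the standard Gaussian `N(0,1)`. -/
noncomputable def stdGaussianPDF (t : ℝ) : ℝ :=
  (1 / Real.sqrt (2 * Real.pi)) * Real.exp (-t ^ 2 / 2)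

open Set Filter
open scoped NNReal Topology

lemma gaussianReal_map_const_mul_add {m : ℝ} {v : ℝ≥0} (c y : ℝ) :
    (gaussianReal m v).map (fun x ↦ c * x + y) =
      gaussianReal (c * m + y) (.mk (c ^ 2) (sq_nonneg c) * v) := by
  rw [← gaussianReal_map_add_const, ← gaussianReal_map_const_mul,
    Measure.map_map (by fun_prop) (by fun_prop)]
  rfl

lemma setIntegral_gaussianReal_eq_setIntegral_smul {E : Type*} [NormedAddCommGroup E]
    [NormedSpace ℝ E] {m : ℝ} {v : ℝ≥0} {f : ℝ → E} {s : Set ℝ} (hv : v ≠ 0)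
    (hs : MeasurableSet s) :
    ∫ x in s, f x ∂gaussianReal m v = ∫ x in s, gaussianPDFReal m v x • f x := by
  rw [gaussianReal_of_var_ne_zero _ hv, setIntegral_withDensity_eq_setIntegral_toReal_smul
    (measurable_gaussianPDF _ _) (ae_of_all _ fun _ ↦ gaussianPDF_lt_top) _ hs]
  simp_rw [toReal_gaussianPDF]

lemma max_zero_mul_add_eq_indicator {τ : ℝ} (hτ : 0 < τ) (μ x : ℝ) :
    max 0 (τ * x + μ) = (Ioi (-(μ / τ))).indicator (fun x ↦ τ * x + μ) x := by
  have hpos : 0 < τ * x + μ ↔ x ∈ Ioi (-(μ / τ)) := by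
    rw [mem_Ioi, ← neg_div, div_lt_iff₀ hτ]
    constructor <;> intro <;> linarith
  by_cases hx : x ∈ Ioi (-(μ / τ))
  · rw [indicator_of_mem hx, max_eq_right (hpos.2 hx).le]
  · rw [indicator_of_notMem hx, max_eq_left (not_lt.1 (mt hpos.1 hx))]

lemma gaussianPDFReal_zero_one : gaussianPDFReal 0 1 = stdGaussianPDF := by
  ext x
  simp [gaussianPDFReal, stdGaussianPDF]

lemma stdGaussianPDF_neg (x : ℝ) : stdGaussianPDF (-x) = stdGaussianPDF x := by
  simp [stdGaussianPDF]

lemma hasDerivAt_neg_stdGaussianPDF (x : ℝ) :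
    HasDerivAt (fun y ↦ -stdGaussianPDF y) (x * stdGaussianPDF x) x := by
  have h : HasDerivAt (fun y : ℝ ↦ -y ^ 2 / 2) (-x) x := by
    simpa using ((hasDerivAt_pow 2 x).neg.div_const 2).congr_deriv (by ring)
  exact (h.exp.const_mul (1 / √(2 * π))).neg.congr_deriv (by simp only [stdGaussianPDF]; ring)

lemma tendsto_stdGaussianPDF_atTop : Tendsto stdGaussianPDF atTop (𝓝 0) := by
  have h : Tendsto (fun x : ℝ ↦ -x ^ 2 / 2) atTop atBot :=
    (tendsto_neg_atBot_iff.2 (tendsto_pow_atTop two_ne_zero)).atBot_div_const two_pos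
  have h' := (tendsto_exp_atBot.comp h).const_mul (1 / √(2 * π))
  rw [mul_zero] at h'
  exact h'

lemma integrable_mul_stdGaussianPDF : Integrable (fun x ↦ x * stdGaussianPDF x) := by
  refine (integrable_mul_exp_neg_mul_sq (b := 1 / 2) (by norm_num)).const_mul (1 / √(2 * π))
    |>.congr (ae_of_all _ fun x ↦ ?_)
  simp only [stdGaussianPDF]
  ring_nf

lemma setIntegral_Ioi_id_stdGaussian (a : ℝ) :
    ∫ x in Ioi a, x ∂gaussianReal 0 1 = stdGaussianPDF a := by
  have h := integral_Ioi_of_hasDerivAt_of_tendsto' (a := a)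
    (fun x _ ↦ hasDerivAt_neg_stdGaussianPDF x) integrable_mul_stdGaussianPDF.integrableOn
    tendsto_stdGaussianPDF_atTop.neg
  rw [setIntegral_gaussianReal_eq_setIntegral_smul one_ne_zero measurableSet_Ioi,
    gaussianPDFReal_zero_one]
  simp_rw [smul_eq_mul, mul_comm (stdGaussianPDF _)]
  simpa using h

lemma measureReal_Ioi_neg_stdGaussian (c : ℝ) :
    (gaussianReal 0 1).real (Ioi (-c)) = stdGaussianCDF c := by
  have := nullSingletonClass_gaussianReal (μ := 0) one_ne_zero
  have hsymm : (gaussianReal 0 1).map (fun x ↦ -x) = gaussianReal 0 1 := by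
    simpa using gaussianReal_map_neg (μ := 0) (v := 1)
  have hIoi : gaussianReal 0 1 (Ioi (-c)) = gaussianReal 0 1 (Iio c) := by
    conv_rhs => rw [← hsymm, Measure.map_apply measurable_neg measurableSet_Iio]
    congr 1; ext x; simp
  rw [stdGaussianCDF, ← measure_congr Iio_ae_eq_Iic, measureReal_def, hIoi]

theorem expectation_max_zero_gaussian (μ τ : ℝ) (hτ : 0 < τ) :
    ∫ v, max 0 v ∂(gaussianReal μ (Real.toNNReal (τ ^ 2))) =
      μ * stdGaussianCDF (μ / τ) + τ * stdGaussianPDF (μ / τ) := by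
  have hstd : gaussianReal μ (τ ^ 2).toNNReal = (gaussianReal 0 1).map (fun x ↦ τ * x + μ) := by
    rw [gaussianReal_map_const_mul_add, mul_zero, zero_add, mul_one]
    congr
    exact Real.toNNReal_of_nonneg (sq_nonneg τ)
  rw [hstd, integral_map (by fun_prop) (by fun_prop)]
  simp_rw [max_zero_mul_add_eq_indicator hτ]
  rw [integral_indicator measurableSet_Ioi, integral_add, integral_const_mul, setIntegral_const,
    setIntegral_Ioi_id_stdGaussian, measureReal_Ioi_neg_stdGaussian, stdGaussianPDF_neg,
    smul_eq_mul]
  · ring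
  · exact ((memLp_id_gaussianReal 1).integrable le_rfl).integrableOn.const_mul τ
  · exact integrableOn_const
end

section
/- The function g : ℝ × ℝ → ℝ defined for r > 0 by g(s, r) := s·Φ(s/r) + r·φ(s/r) is convex on the set ℝ × (0, ∞), where Φ and φ are the cdf and pdf of the standard Gaussian N(0,1). (Equivalently, g(s, r) = E_{Z∼N(0,1)}[max(0, s + r·Z)], an expectation of a function that is jointly convex in (s, r) for every fixed Z.) -/
open MeasureTheory ProbabilityTheory Real

/-!
`g(s, r) = r · h(s / r)` is the perspective of `h(u) = u Φ(u) + φ(u)`. Since `φ' = -u φ`, we get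
`h' = Φ`, which is monotone, so `h` is convex; and the perspective of a convex function is
convex, by rescaling the convex combination with weights `a r₁ / r` and `b r₂ / r`.
-/

theorem ConvexOn.perspective {E : Type*} [AddCommGroup E] [Module ℝ E] {h : E → ℝ}
    (hh : ConvexOn ℝ Set.univ h) :
    ConvexOn ℝ {p : E × ℝ | 0 < p.2} (fun p => p.2 * h (p.2⁻¹ • p.1)) := by
  refine ⟨convex_halfSpace_gt (LinearMap.snd ℝ E ℝ).isLinear 0, ?_⟩
  rintro ⟨x₁, r₁⟩ (hr₁ : 0 < r₁) ⟨x₂, r₂⟩ (hr₂ : 0 < r₂) a b ha hb hab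
  simp only [Prod.smul_mk, Prod.mk_add_mk, smul_eq_mul]
  set r := a * r₁ + b * r₂
  have hr : 0 < r := by
    rcases ha.eq_or_lt with rfl | ha
    · simpa [r, show b = 1 by linarith] using hr₂
    · positivity
  have hsum : a * r₁ / r + b * r₂ / r = 1 := by rw [← add_div, div_self hr.ne']
  have harg : r⁻¹ • (a • x₁ + b • x₂) = (a * r₁ / r) • r₁⁻¹ • x₁ + (b * r₂ / r) • r₂⁻¹ • x₂ := by
    simp only [smul_add, smul_smul]
    congr 2 <;> field_simp
  have key := hh.2 (Set.mem_univ (r₁⁻¹ • x₁)) (Set.mem_univ (r₂⁻¹ • x₂))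
    (by positivity) (by positivity) hsum
  rw [← harg, smul_eq_mul, smul_eq_mul] at key
  calc r * h (r⁻¹ • (a • x₁ + b • x₂))
      ≤ r * (a * r₁ / r * h (r₁⁻¹ • x₁) + b * r₂ / r * h (r₂⁻¹ • x₂)) :=
        mul_le_mul_of_nonneg_left key hr.le
    _ = a * (r₁ * h (r₁⁻¹ • x₁)) + b * (r₂ * h (r₂⁻¹ • x₂)) := by field_simp

theorem hasDerivAt_integral_Iic {E : Type*} [NormedAddCommGroup E] [NormedSpace ℝ E]
    [CompleteSpace E] {f : ℝ → E} (hf : Integrable f) {t : ℝ} (hft : ContinuousAt f t) :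
    HasDerivAt (fun u => ∫ x in Set.Iic u, f x) (f t) t := by
  have hFTC : HasDerivAt (fun u => ∫ x in (0 : ℝ)..u, f x) (f t) t :=
    intervalIntegral.integral_hasDerivAt_right hf.intervalIntegrable
      hf.aestronglyMeasurable.stronglyMeasurableAtFilter hft
  refine (hFTC.add_const (∫ x in Set.Iic 0, f x)).congr_of_eventuallyEq
    (Filter.Eventually.of_forall fun u => ?_)
  simp only [← intervalIntegral.integral_Iic_sub_Iic hf.integrableOn hf.integrableOn,
    sub_add_cancel]

theorem stdGaussianPDF_eq_gaussianPDFReal : stdGaussianPDF = gaussianPDFReal 0 1 := by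
  ext t
  simp [stdGaussianPDF, gaussianPDFReal]

theorem stdGaussianCDF_eq_integral (t : ℝ) :
    stdGaussianCDF t = ∫ x in Set.Iic t, stdGaussianPDF x := by
  rw [stdGaussianCDF, gaussianReal_apply_eq_integral 0 one_ne_zero, ENNReal.toReal_ofReal,
    stdGaussianPDF_eq_gaussianPDFReal]
  exact integral_nonneg fun x => gaussianPDFReal_nonneg 0 1 x

theorem monotone_stdGaussianCDF : Monotone stdGaussianCDF := fun _ _ hab =>
  ENNReal.toReal_mono (measure_ne_top _ _) (measure_mono (Set.Iic_subset_Iic.mpr hab))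

theorem hasDerivAt_stdGaussianCDF (t : ℝ) :
    HasDerivAt stdGaussianCDF (stdGaussianPDF t) t := by
  have hint : Integrable stdGaussianPDF := by
    rw [stdGaussianPDF_eq_gaussianPDFReal]
    exact integrable_gaussianPDFReal 0 1
  have hcont : Continuous stdGaussianPDF := by
    unfold stdGaussianPDF
    fun_prop
  rw [funext stdGaussianCDF_eq_integral]
  exact hasDerivAt_integral_Iic hint hcont.continuousAt

theorem hasDerivAt_stdGaussianPDF (t : ℝ) :
    HasDerivAt stdGaussianPDF (-t * stdGaussianPDF t) t := by
  have hexp : HasDerivAt (fun t : ℝ => -t ^ 2 / 2) (-t) t := by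
    simpa using ((hasDerivAt_pow 2 t).neg.div_const 2).congr_deriv (by ring)
  exact (hexp.exp.const_mul _).congr_deriv (by unfold stdGaussianPDF; ring)

theorem hasDerivAt_mul_stdGaussianCDF_add_stdGaussianPDF (u : ℝ) :
    HasDerivAt (fun u => u * stdGaussianCDF u + stdGaussianPDF u) (stdGaussianCDF u) u :=
  (((hasDerivAt_id u).mul (hasDerivAt_stdGaussianCDF u)).add
    (hasDerivAt_stdGaussianPDF u)).congr_deriv (by simp only [id_eq]; ring)

theorem convexOn_mul_stdGaussianCDF_add_stdGaussianPDF :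
    ConvexOn ℝ Set.univ (fun u => u * stdGaussianCDF u + stdGaussianPDF u) := by
  refine Monotone.convexOn_univ_of_deriv
    (fun u => (hasDerivAt_mul_stdGaussianCDF_add_stdGaussianPDF u).differentiableAt) ?_
  rw [funext fun u => (hasDerivAt_mul_stdGaussianCDF_add_stdGaussianPDF u).deriv]
  exact monotone_stdGaussianCDF

/-- The function `g(s, r) = s·Φ(s/r) + r·φ(s/r)` is convex on `ℝ × (0, ∞)`. -/
theorem convexOn_closed_form_expected_hinge :
    ConvexOn ℝ {p : ℝ × ℝ | 0 < p.2}
      (fun p : ℝ × ℝ =>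
        p.1 * stdGaussianCDF (p.1 / p.2) + p.2 * stdGaussianPDF (p.1 / p.2)) := by
  refine convexOn_mul_stdGaussianCDF_add_stdGaussianPDF.perspective.congr ?_
  rintro ⟨s, r⟩ (hr : 0 < r)
  simp only [smul_eq_mul, ← div_eq_inv_mul]
  field_simp
end
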